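/- Let F and K be classes of measurable functions with envelopes F₀ and κ respectively, satisfying uniform entropy bounds N(ε√(Q F₀²), F, d_Q) ≤ C₁ ε^{-ν₁} and N(ε κ, K, d_Q) ≤ C₂ ε^{-ν₂} for all probability measures Q and 0 < ε < 1. Then the product class G = {f·k : f ∈ F, k ∈ K} with envelope F₀κ satisfies a uniform entropy bound: there exists a constant C such that N(ε√(Q(F₀κ)²), G, d_Q) ≤ C ε^{-ν} for all probability measures Q and 0 < ε < 1, where ν = ν₁ + ν₂. -/
import Mathlib

open MeasureTheory
open scoped NNReal ENNReal

/-- The `L²(Q)` pseudo-distance between two functions. -/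
noncomputable def dL2 {X : Type*} [MeasurableSpace X] (Q : Measure X) (f g : X → ℝ) : ℝ :=
  Real.sqrt (∫ x, (f x - g x) ^ 2 ∂Q)

lemma dL2_nonneg {X : Type*} [MeasurableSpace X] (Q : Measure X) (f g : X → ℝ) :
    0 ≤ dL2 Q f g := Real.sqrt_nonneg _

lemma dL2_eq_zero_of_not_integrable {X : Type*} [MeasurableSpace X] {Q : Measure X}
    {f g : X → ℝ} (h : ¬ Integrable (fun x => (f x - g x) ^ 2) Q) : dL2 Q f g = 0 := by
  rw [dL2, integral_undef h, Real.sqrt_zero]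

lemma aemeasurable_of_indicator_aemeasurable {X : Type*} [MeasurableSpace X] (Q : Measure X)
    (h : ∀ A : Set X, AEMeasurable (A.indicator (fun _ => (1:ℝ))) Q) (v : X → ℝ) :
    AEMeasurable v Q := by
  classical
  set A : ℚ → Set X := fun q => {x | v x ≤ (q:ℝ)} with hA
  have hmeq : ∀ q : ℚ, (A q).indicator (fun _ => (1:ℝ)) =ᵐ[Q] (h (A q)).mk _ :=
    fun q => (h (A q)).ae_eq_mk
  have hN0 : Q (⋃ q : ℚ, {x | (A q).indicator (fun _ => (1:ℝ)) x ≠ (h (A q)).mk _ x}) = 0 :=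
    measure_iUnion_null fun q => ae_iff.mp (hmeq q)
  obtain ⟨N, hsub, hNm, hN⟩ := exists_measurable_superset_of_null hN0
  refine ⟨fun x => if x ∈ N then 0 else v x, ?_, ?_⟩
  · apply measurable_of_Iic
    intro c
    have key : (fun x => if x ∈ N then 0 else v x) ⁻¹' Set.Iic c
        = ((if (0:ℝ) ≤ c then N else ∅) ∪
            (Nᶜ ∩ ⋂ q : {q : ℚ // c < (q:ℝ)}, (h (A q.1)).mk _ ⁻¹' {1})) := by
      ext x
      by_cases hx : x ∈ N
      · by_cases h0 : (0:ℝ) ≤ c <;>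
          simp [Set.mem_preimage, hx, h0]
      · have hx0 : ∀ q : ℚ, (A q).indicator (fun _ => (1:ℝ)) x = (h (A q)).mk _ x := by
          intro q
          by_contra hc
          exact hx (hsub (Set.mem_iUnion.mpr ⟨q, hc⟩))
        have hiff : ∀ q : ℚ, x ∈ A q ↔ (h (A q)).mk _ x = 1 := by
          intro q
          rw [← hx0 q]
          by_cases hq : x ∈ A q <;> simp [Set.indicator_apply, hq]
        simp only [Set.mem_preimage, Set.mem_Iic, if_neg hx, Set.mem_union, Set.mem_inter_iff,
          Set.mem_compl_iff, Set.mem_iInter, hx, not_false_iff, true_and]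
        rw [le_iff_forall_lt_rat_imp_le]
        constructor
        · intro H
          refine Or.inr fun q => ?_
          have := (hiff q.1).mp (H q.1 q.2)
          simpa using this
        · rintro (hN' | H) q hq
          · exfalso
            split_ifs at hN' with h0
            · exact hx hN'
            · exact hN'
          · exact (hiff q).mpr (by simpa using H ⟨q, hq⟩)
    rw [key]
    refine MeasurableSet.union ?_ (hNm.compl.inter (MeasurableSet.iInter fun q =>
      ((h (A q.1)).measurable_mk (measurableSet_singleton (1:ℝ)))))
    split_ifs
    · exact hNm
    · exact MeasurableSet.empty
  · have hss : {x | v x ≠ (if x ∈ N then 0 else v x)} ⊆ N := by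
      intro x hx
      by_contra hc
      exact hx (by simp [if_neg hc])
    exact ae_iff.mpr (measure_mono_null hss hN)

/-- clamping to `[-B, B]` does not increase distance to a point of `[-B, B]`. -/
lemma abs_sub_clamp_le {a b B : ℝ} (hB : 0 ≤ B) (ha : |a| ≤ B) :
    |a - max (-B) (min B b)| ≤ |a - b| := by
  obtain ⟨ha1, ha2⟩ := abs_le.mp ha
  rcases le_total b (-B) with h1 | h1
  · have hmin : min B b = b := min_eq_right (by linarith)
    have hmax : max (-B) b = -B := max_eq_left h1
    rw [hmin, hmax, abs_of_nonneg (by linarith), abs_of_nonneg (by linarith)]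
    linarith
  · rcases le_total b B with h2 | h2
    · rw [min_eq_right h2, max_eq_right h1]
    · rw [min_eq_left h2, max_eq_right (by linarith : -B ≤ B),
        abs_of_nonpos (by linarith), abs_of_nonpos (by linarith)]
      linarith

set_option maxHeartbeats 1600000 in
/-- Uniform entropy bound for a product class (Lemma A.1 of Einmahl–Mason (2000),
two factors): if `F` has envelope `F₀` with covering numbers `≤ C₁ ε^{-ν₁}` and `K` has
constant envelope `κ` with covering numbers `≤ C₂ ε^{-ν₂}`, uniformly over probability
measures `Q`, then the product class `{f·k}` with envelope `F₀·κ` has covering numbers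
`≤ C ε^{-(ν₁+ν₂)}` for some constant `C`. -/
theorem product_class_uniform_entropy {X : Type*} [MeasurableSpace X]
    (F K : Set (X → ℝ)) (F₀ : X → ℝ) (κ : ℝ) (hκ : 0 < κ)
    (C₁ C₂ ν₁ ν₂ : ℝ) (hC₁ : 0 < C₁) (hC₂ : 0 < C₂) (hν₁ : 0 < ν₁) (hν₂ : 0 < ν₂)
    (hF₀ : ∀ x, 0 ≤ F₀ x)
    (hFenv : ∀ f ∈ F, ∀ x, |f x| ≤ F₀ x)
    (hKenv : ∀ k ∈ K, ∀ x, |k x| ≤ κ)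
    (hF : ∀ (Q : Measure X) [IsProbabilityMeasure Q], ∀ ε : ℝ, 0 < ε → ε < 1 →
      ∃ T : Finset (X → ℝ), (T.card : ℝ) ≤ C₁ * ε ^ (-ν₁) ∧
        ∀ f ∈ F, ∃ f' ∈ T, dL2 Q f f' < ε * Real.sqrt (∫ x, F₀ x ^ 2 ∂Q))
    (hK : ∀ (Q : Measure X) [IsProbabilityMeasure Q], ∀ ε : ℝ, 0 < ε → ε < 1 →
      ∃ T : Finset (X → ℝ), (T.card : ℝ) ≤ C₂ * ε ^ (-ν₂) ∧
        ∀ k ∈ K, ∃ k' ∈ T, dL2 Q k k' < ε * κ) :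
    ∃ C > (0:ℝ), ∀ (Q : Measure X) [IsProbabilityMeasure Q], ∀ ε : ℝ, 0 < ε → ε < 1 →
      ∃ T : Finset (X → ℝ), (T.card : ℝ) ≤ C * ε ^ (-(ν₁ + ν₂)) ∧
        ∀ g ∈ {g : X → ℝ | ∃ f ∈ F, ∃ k ∈ K, g = fun x => f x * k x},
          ∃ g' ∈ T, dL2 Q g g' < ε * Real.sqrt (∫ x, (F₀ x * κ) ^ 2 ∂Q) := by
  classical
  set ν : ℝ := ν₁ + ν₂ with hνdef
  have hν : 0 < ν := by positivity
  refine ⟨3 + C₁ * C₂ * (2:ℝ) ^ ν, by positivity, ?_⟩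
  intro Q _ ε hε hε1
  have hεν1 : (1:ℝ) ≤ ε ^ (-ν) :=
    Real.one_le_rpow_of_pos_of_le_one_of_nonpos hε hε1.le (by linarith)
  have hεν0 : (0:ℝ) < ε ^ (-ν) := Real.rpow_pos_of_pos hε _
  set S : ℝ := ∫ x, F₀ x ^ 2 ∂Q with hS
  have hS0 : 0 ≤ S := integral_nonneg fun x => sq_nonneg _
  have hrad : ε * Real.sqrt (∫ x, (F₀ x * κ) ^ 2 ∂Q) = ε * (κ * Real.sqrt S) := by
    have h1 : (fun x => (F₀ x * κ) ^ 2) = fun x => κ ^ 2 * F₀ x ^ 2 := by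
      funext x; ring
    rw [h1, integral_const_mul, Real.sqrt_mul (sq_nonneg κ), Real.sqrt_sq hκ.le, hS]
  rcases eq_or_lt_of_le hS0 with hSeq | hSpos
  · -- degenerate case : `F` is empty
    obtain ⟨T₁, -, hcov⟩ := hF Q ε hε hε1
    have hFe : F = ∅ := by
      rw [Set.eq_empty_iff_forall_notMem]
      intro f hf
      obtain ⟨f', -, hlt⟩ := hcov f hf
      rw [← hS, ← hSeq, Real.sqrt_zero, mul_zero] at hlt
      exact absurd hlt (not_lt.mpr (dL2_nonneg Q f f'))
    refine ⟨∅, by simpa using by positivity, ?_⟩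
    rintro g ⟨f, hf, -⟩
    rw [hFe] at hf
    exact absurd hf (Set.notMem_empty f)
  · -- main case : `S > 0`
    have hsq : 0 < Real.sqrt S := Real.sqrt_pos.mpr hSpos
    have htarget : 0 < ε * Real.sqrt (∫ x, (F₀ x * κ) ^ 2 ∂Q) := by
      rw [hrad]; positivity
    have hFint : Integrable (fun x => F₀ x ^ 2) Q := by
      by_contra hni
      rw [hS, integral_undef hni] at hSpos
      exact lt_irrefl _ hSpos
    have hgb : ∀ f ∈ F, ∀ k ∈ K, ∀ x, |f x * k x| ≤ F₀ x * κ := by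
      intro f hf k hk x
      rw [abs_mul]
      exact mul_le_mul (hFenv f hf x) (hKenv k hk x) (abs_nonneg _) (hF₀ x)
    by_cases hI : ∀ v : X → ℝ, AEMeasurable v Q
    · by_cases hIa : ∀ v : X → ℝ, Integrable (fun x => v x ^ 2) Q
      · -- fully integrable world : honest construction
        have hIntAll : ∀ u : X → ℝ, Integrable u Q := by
          intro u
          have hdom : Integrable (fun x => u x ^ 2 + 1) Q := by
            simpa using (hIa u).add (integrable_const 1)
          refine hdom.mono (hI u).aestronglyMeasurable (ae_of_all _ fun x => ?_)
          rw [Real.norm_eq_abs, Real.norm_eq_abs]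
          have h1 : (0:ℝ) ≤ u x ^ 2 + 1 := by positivity
          rw [abs_of_nonneg h1]
          nlinarith [sq_abs (u x), abs_nonneg (u x)]
        obtain ⟨φ₀, hφ₀m, hφ₀e⟩ := hI (fun x => F₀ x ^ 2)
        set φ : X → ℝ := fun x => max (φ₀ x) 0 with hφ
        have hφm : Measurable φ := hφ₀m.max measurable_const
        have hφe : (fun x => F₀ x ^ 2) =ᵐ[Q] φ := by
          filter_upwards [hφ₀e] with x hx
          simp only [hφ]
          rw [← hx]
          exact (max_eq_left (sq_nonneg _)).symm
        have hφ0 : ∀ x, 0 ≤ φ x := fun x => le_max_right _ _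
        have hφint : ∫ x, φ x ∂Q = S := by
          rw [hS]; exact (integral_congr_ae hφe).symm
        set ρ : X → ℝ≥0 := fun x => Real.toNNReal (φ x / S) with hρ
        have hρm : Measurable ρ := measurable_real_toNNReal.comp (hφm.div_const S)
        set Q' : Measure X := Q.withDensity (fun x => (ρ x : ℝ≥0∞)) with hQ'
        have hρcoe : ∀ x, ((ρ x : ℝ)) = φ x / S := fun x =>
          Real.coe_toNNReal _ (div_nonneg (hφ0 x) hS0)
        haveI hQ'p : IsProbabilityMeasure Q' := by
          constructor
          rw [hQ', withDensity_apply _ MeasurableSet.univ, Measure.restrict_univ]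
          have h2 : ∀ x, ((ρ x : ℝ≥0∞)) = ENNReal.ofReal (φ x / S) := fun x => rfl
          calc ∫⁻ x, (ρ x : ℝ≥0∞) ∂Q = ∫⁻ x, ENNReal.ofReal (φ x / S) ∂Q := by
                simp only [h2]
            _ = ENNReal.ofReal (∫ x, φ x / S ∂Q) :=
                (ofReal_integral_eq_lintegral_ofReal (hIntAll _)
                  (ae_of_all _ fun x => div_nonneg (hφ0 x) hS0)).symm
            _ = 1 := by
                rw [integral_div, hφint, div_self hSpos.ne']
                exact ENNReal.ofReal_one
        have hQ'int : ∀ u : X → ℝ, Integrable u Q' := by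
          intro u
          rw [hQ', integrable_withDensity_iff_integrable_smul hρm]
          exact hIntAll _
        have hQ'eq : ∀ u : X → ℝ, ∫ x, u x ∂Q' = ∫ x, (φ x / S) * u x ∂Q := by
          intro u
          rw [hQ', integral_withDensity_eq_integral_smul hρm]
          refine integral_congr_ae (ae_of_all _ fun x => ?_)
          simp only [NNReal.smul_def, smul_eq_mul]
          rw [hρcoe]
        have hhalf0 : 0 < ε / 2 := by positivity
        have hhalf1 : ε / 2 < 1 := by linarith
        obtain ⟨T₁, hT₁c, hT₁⟩ := hF Q (ε / 2) hhalf0 hhalf1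
        obtain ⟨T₂, hT₂c, hT₂⟩ := hK Q' (ε / 2) hhalf0 hhalf1
        set clF : (X → ℝ) → X → ℝ := fun t x => max (-F₀ x) (min (F₀ x) (t x)) with hclF
        set clK : (X → ℝ) → X → ℝ := fun t x => max (-κ) (min κ (t x)) with hclK
        set T : Finset (X → ℝ) :=
          Finset.image (fun p : (X → ℝ) × (X → ℝ) => fun x => clF p.1 x * clK p.2 x)
            (T₁ ×ˢ T₂) with hTdef
        refine ⟨T, ?_, ?_⟩
        · have hc : (T.card : ℝ) ≤ (T₁.card : ℝ) * (T₂.card : ℝ) := by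
            have h1 := Finset.card_image_le (s := T₁ ×ˢ T₂)
              (f := fun p : (X → ℝ) × (X → ℝ) => fun x => clF p.1 x * clK p.2 x)
            rw [Finset.card_product] at h1
            exact_mod_cast h1
          have hmul : (T₁.card : ℝ) * (T₂.card : ℝ)
              ≤ (C₁ * (ε/2) ^ (-ν₁)) * (C₂ * (ε/2) ^ (-ν₂)) :=
            mul_le_mul hT₁c hT₂c (Nat.cast_nonneg _)
              (mul_nonneg hC₁.le (Real.rpow_nonneg hhalf0.le _))
          have hrpow : (ε/2) ^ (-ν₁) * (ε/2) ^ (-ν₂) = 2 ^ ν * ε ^ (-ν) := by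
            rw [← Real.rpow_add (by positivity : (0:ℝ) < ε/2)]
            have h3 : -ν₁ + -ν₂ = -ν := by rw [hνdef]; ring
            rw [h3, div_eq_mul_inv, Real.mul_rpow hε.le (by norm_num)]
            have h4 : ((2:ℝ)⁻¹) ^ (-ν) = 2 ^ ν := by
              rw [Real.inv_rpow (by norm_num), Real.rpow_neg (by norm_num), inv_inv]
            rw [h4, mul_comm]
          calc (T.card : ℝ) ≤ (C₁ * (ε/2) ^ (-ν₁)) * (C₂ * (ε/2) ^ (-ν₂)) := le_trans hc hmul
            _ = C₁ * C₂ * ((ε/2) ^ (-ν₁) * (ε/2) ^ (-ν₂)) := by ring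
            _ = C₁ * C₂ * 2 ^ ν * ε ^ (-ν) := by rw [hrpow]; ring
            _ ≤ (3 + C₁ * C₂ * 2 ^ ν) * ε ^ (-ν) := by nlinarith
        · rintro g ⟨f, hf, k, hk, rfl⟩
          obtain ⟨t₁, ht₁T, ht₁⟩ := hT₁ f hf
          obtain ⟨t₂, ht₂T, ht₂⟩ := hT₂ k hk
          set f₁ : X → ℝ := clF t₁ with hf₁
          set k₁ : X → ℝ := clK t₂ with hk₁
          refine ⟨fun x => f₁ x * k₁ x, Finset.mem_image.mpr
            ⟨(t₁, t₂), Finset.mem_product.mpr ⟨ht₁T, ht₂T⟩, rfl⟩, ?_⟩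
          have hf₁b : ∀ x, |f₁ x| ≤ F₀ x := by
            intro x
            have h1 : f₁ x = max (-F₀ x) (min (F₀ x) (t₁ x)) := rfl
            rw [h1, abs_le]
            exact ⟨le_max_left _ _, max_le (by linarith [hF₀ x]) (min_le_left _ _)⟩
          have hk₁b : ∀ x, |k₁ x| ≤ κ := by
            intro x
            have h1 : k₁ x = max (-κ) (min κ (t₂ x)) := rfl
            rw [h1, abs_le]
            exact ⟨le_max_left _ _, max_le (by linarith) (min_le_left _ _)⟩
          have hfc : ∀ x, |f x - f₁ x| ≤ |f x - t₁ x| := fun x =>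
            abs_sub_clamp_le (hF₀ x) (hFenv f hf x)
          have hkc : ∀ x, |k x - k₁ x| ≤ |k x - t₂ x| := fun x =>
            abs_sub_clamp_le hκ.le (hKenv k hk x)
          have hA : ∫ x, (f x - f₁ x) ^ 2 ∂Q < (ε / 2 * Real.sqrt S) ^ 2 := by
            have h1 : ∫ x, (f x - f₁ x) ^ 2 ∂Q ≤ ∫ x, (f x - t₁ x) ^ 2 ∂Q := by
              refine integral_mono (hIntAll _) (hIntAll _) fun x => ?_
              have h2 := hfc x
              calc (f x - f₁ x) ^ 2 = |f x - f₁ x| ^ 2 := (sq_abs _).symm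
                _ ≤ |f x - t₁ x| ^ 2 := pow_le_pow_left₀ (abs_nonneg _) h2 2
                _ = (f x - t₁ x) ^ 2 := sq_abs _
            have h3 := ht₁
            rw [dL2, ← hS] at h3
            have h4 : 0 ≤ ∫ x, (f x - t₁ x) ^ 2 ∂Q := integral_nonneg fun x => sq_nonneg _
            have h5 := pow_lt_pow_left₀ h3 (Real.sqrt_nonneg _) (two_ne_zero)
            rw [Real.sq_sqrt h4] at h5
            exact lt_of_le_of_lt h1 h5
          have hB : ∫ x, (k x - k₁ x) ^ 2 ∂Q' < (ε / 2 * κ) ^ 2 := by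
            have h1 : ∫ x, (k x - k₁ x) ^ 2 ∂Q' ≤ ∫ x, (k x - t₂ x) ^ 2 ∂Q' := by
              refine integral_mono (hQ'int _) (hQ'int _) fun x => ?_
              have h2 := hkc x
              calc (k x - k₁ x) ^ 2 = |k x - k₁ x| ^ 2 := (sq_abs _).symm
                _ ≤ |k x - t₂ x| ^ 2 := pow_le_pow_left₀ (abs_nonneg _) h2 2
                _ = (k x - t₂ x) ^ 2 := sq_abs _
            have h3 := ht₂
            rw [dL2] at h3
            have h4 : 0 ≤ ∫ x, (k x - t₂ x) ^ 2 ∂Q' := integral_nonneg fun x => sq_nonneg _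
            have h5 := pow_lt_pow_left₀ h3 (Real.sqrt_nonneg _) (two_ne_zero)
            rw [Real.sq_sqrt h4] at h5
            exact lt_of_le_of_lt h1 h5
          have hBw : ∫ x, F₀ x ^ 2 * (k x - k₁ x) ^ 2 ∂Q < S * (ε / 2 * κ) ^ 2 := by
            have h1 : ∫ x, F₀ x ^ 2 * (k x - k₁ x) ^ 2 ∂Q
                = ∫ x, φ x * (k x - k₁ x) ^ 2 ∂Q := by
              refine integral_congr_ae ?_
              filter_upwards [hφe] with x hx
              rw [hx]
            have h2 : (fun x => φ x * (k x - k₁ x) ^ 2)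
                = fun x => S * ((φ x / S) * (k x - k₁ x) ^ 2) := by
              funext x; field_simp
            have h3 : ∫ x, φ x * (k x - k₁ x) ^ 2 ∂Q
                = S * ∫ x, (φ x / S) * (k x - k₁ x) ^ 2 ∂Q := by
              rw [h2, integral_const_mul]
            have h4 : ∫ x, (k x - k₁ x) ^ 2 ∂Q'
                = ∫ x, (φ x / S) * (k x - k₁ x) ^ 2 ∂Q := hQ'eq _
            rw [h1, h3, ← h4]
            exact mul_lt_mul_of_pos_left hB hSpos
          have hmain : ∫ x, (f x * k x - f₁ x * k₁ x) ^ 2 ∂Q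
              < 2 * κ ^ 2 * (ε / 2 * Real.sqrt S) ^ 2 + 2 * (S * (ε / 2 * κ) ^ 2) := by
            have h1 : ∫ x, (f x * k x - f₁ x * k₁ x) ^ 2 ∂Q
                ≤ ∫ x, (2 * κ ^ 2 * (f x - f₁ x) ^ 2
                    + 2 * (F₀ x ^ 2 * (k x - k₁ x) ^ 2)) ∂Q := by
              refine integral_mono (hIntAll _) (hIntAll _) fun x => ?_
              have hk2 : k x ^ 2 ≤ κ ^ 2 := by
                nlinarith [hKenv k hk x, abs_nonneg (k x), sq_abs (k x)]
              have hf12 : f₁ x ^ 2 ≤ F₀ x ^ 2 := by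
                nlinarith [hf₁b x, abs_nonneg (f₁ x), sq_abs (f₁ x)]
              nlinarith [sq_nonneg ((f x - f₁ x) * k x - f₁ x * (k x - k₁ x)),
                mul_le_mul_of_nonneg_left hk2 (sq_nonneg (f x - f₁ x)),
                mul_le_mul_of_nonneg_left hf12 (sq_nonneg (k x - k₁ x))]
            have h2 : ∫ x, (2 * κ ^ 2 * (f x - f₁ x) ^ 2
                  + 2 * (F₀ x ^ 2 * (k x - k₁ x) ^ 2)) ∂Q
                = 2 * κ ^ 2 * ∫ x, (f x - f₁ x) ^ 2 ∂Q
                  + 2 * ∫ x, F₀ x ^ 2 * (k x - k₁ x) ^ 2 ∂Q := by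
              rw [integral_add (hIntAll _) (hIntAll _), integral_const_mul, integral_const_mul]
            calc ∫ x, (f x * k x - f₁ x * k₁ x) ^ 2 ∂Q
                ≤ 2 * κ ^ 2 * ∫ x, (f x - f₁ x) ^ 2 ∂Q
                  + 2 * ∫ x, F₀ x ^ 2 * (k x - k₁ x) ^ 2 ∂Q := by rw [← h2]; exact h1
              _ < 2 * κ ^ 2 * (ε / 2 * Real.sqrt S) ^ 2 + 2 * (S * (ε / 2 * κ) ^ 2) :=
                add_lt_add (mul_lt_mul_of_pos_left hA (by positivity))
                  (mul_lt_mul_of_pos_left hBw (by norm_num))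
          have hsum : 2 * κ ^ 2 * (ε / 2 * Real.sqrt S) ^ 2 + 2 * (S * (ε / 2 * κ) ^ 2)
              = (ε * (κ * Real.sqrt S)) ^ 2 := by
            have h5 : Real.sqrt S ^ 2 = S := Real.sq_sqrt hS0
            linear_combination (-(κ^2 * ε^2) / 2) * h5
          rw [hrad]
          have hlt : ∫ x, (f x * k x - f₁ x * k₁ x) ^ 2 ∂Q
              < (ε * (κ * Real.sqrt S)) ^ 2 := by
            rw [← hsum]; exact hmain
          have h7 : 0 ≤ ε * (κ * Real.sqrt S) := by positivity
          show Real.sqrt (∫ x, (f x * k x - f₁ x * k₁ x) ^ 2 ∂Q) < ε * (κ * Real.sqrt S)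
          calc Real.sqrt (∫ x, (f x * k x - f₁ x * k₁ x) ^ 2 ∂Q)
              < Real.sqrt ((ε * (κ * Real.sqrt S)) ^ 2) :=
                Real.sqrt_lt_sqrt (integral_nonneg fun x => sq_nonneg _) hlt
            _ = ε * (κ * Real.sqrt S) := Real.sqrt_sq h7
      · -- exists v with v² not integrable : one probe covers everything
        push_neg at hIa
        obtain ⟨v, hv⟩ := hIa
        set p : X → ℝ := fun x => F₀ x * κ + |v x| with hp
        refine ⟨{p}, ?_, ?_⟩
        · simp only [Finset.card_singleton, Nat.cast_one]
          have hcc : (0:ℝ) < C₁ * C₂ * (2:ℝ) ^ ν := by positivity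
          calc (1:ℝ) ≤ ε ^ (-ν) := hεν1
            _ ≤ (3 + C₁ * C₂ * (2:ℝ) ^ ν) * ε ^ (-ν) :=
              le_mul_of_one_le_left hεν0.le (by nlinarith)
        · rintro g ⟨f, hf, k, hk, rfl⟩
          refine ⟨p, Finset.mem_singleton_self p, ?_⟩
          have hni : ¬ Integrable (fun x => (f x * k x - p x) ^ 2) Q := by
            intro hint
            apply hv
            refine hint.mono (hI _).aestronglyMeasurable (ae_of_all _ fun x => ?_)
            rw [Real.norm_eq_abs, Real.norm_eq_abs, abs_of_nonneg (sq_nonneg _),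
              abs_of_nonneg (sq_nonneg _)]
            obtain ⟨h1, h2⟩ := abs_le.mp (hgb f hf k hk x)
            have h3 : |v x| ≤ p x - f x * k x := by
              rw [hp]; simp only; linarith
            nlinarith [abs_nonneg (v x), sq_abs (v x)]
          rw [dL2_eq_zero_of_not_integrable hni]
          exact htarget
    · -- exists a non-a.e.-measurable function : three probes cover everything
      have hA : ∃ A : Set X, ¬ AEMeasurable (A.indicator (fun _ => (1:ℝ))) Q := by
        by_contra hall
        push_neg at hall
        push_neg at hI
        obtain ⟨v, hv⟩ := hI
        exact hv (aemeasurable_of_indicator_aemeasurable Q hall v)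
      obtain ⟨A, hA⟩ := hA
      have hFaem : AEMeasurable F₀ Q := by
        have h2 : AEMeasurable (fun x => F₀ x ^ 2) Q := hFint.aemeasurable
        have h3 : F₀ = fun x => Real.sqrt (F₀ x ^ 2) :=
          funext fun x => (Real.sqrt_sq (hF₀ x)).symm
        rw [h3]
        exact Real.continuous_sqrt.measurable.comp_aemeasurable h2
      set w : X → ℝ := fun x => (2 * F₀ x * κ + 1) * A.indicator (fun _ => (1:ℝ)) x with hw
      set T : Finset (X → ℝ) := {(fun _ => (0:ℝ)), w, fun x => - w x} with hT
      refine ⟨T, ?_, ?_⟩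
      · have hc3 : T.card ≤ 3 := by
          refine le_trans (Finset.card_insert_le _ _) (Nat.succ_le_succ ?_)
          refine le_trans (Finset.card_insert_le _ _) (Nat.succ_le_succ ?_)
          exact le_of_eq (Finset.card_singleton _)
        have hTc : (T.card : ℝ) ≤ 3 := by exact_mod_cast hc3
        have hcc : (0:ℝ) < C₁ * C₂ * (2:ℝ) ^ ν := by positivity
        calc (T.card : ℝ) ≤ 3 := hTc
          _ = 3 * 1 := by ring
          _ ≤ (3 + C₁ * C₂ * (2:ℝ) ^ ν) * ε ^ (-ν) :=
            mul_le_mul (by nlinarith) hεν1 zero_le_one (by nlinarith)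
      · rintro g ⟨f, hf, k, hk, rfl⟩
        set g : X → ℝ := fun x => f x * k x with hg
        by_cases h0 : Integrable (fun x => (g x - (fun _ => (0:ℝ)) x) ^ 2) Q
        swap
        · refine ⟨fun _ => (0:ℝ), Finset.mem_insert_self _ _, ?_⟩
          rw [dL2_eq_zero_of_not_integrable h0]
          exact htarget
        by_cases hw1 : Integrable (fun x => (g x - w x) ^ 2) Q
        swap
        · refine ⟨w, Finset.mem_insert_of_mem (Finset.mem_insert_self _ _), ?_⟩
          rw [dL2_eq_zero_of_not_integrable hw1]
          exact htarget
        by_cases hw2 : Integrable (fun x => (g x - (fun y => - w y) x) ^ 2) Q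
        swap
        · refine ⟨fun y => - w y,
            Finset.mem_insert_of_mem (Finset.mem_insert_of_mem (Finset.mem_singleton_self _)), ?_⟩
          rw [dL2_eq_zero_of_not_integrable hw2]
          exact htarget
        exfalso
        apply hA
        have hg2 : AEMeasurable (fun x => g x ^ 2) Q := by
          have := h0.aemeasurable
          simpa using this
        have hb : AEMeasurable (fun x => (g x - w x) ^ 2) Q := hw1.aemeasurable
        have hc : AEMeasurable (fun x => (g x + w x) ^ 2) Q := by
          have := hw2.aemeasurable
          simpa [sub_neg_eq_add] using this
        have hwsq : AEMeasurable (fun x => w x ^ 2) Q := by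
          have h4 : (fun x => w x ^ 2)
              = fun x => ((g x - w x) ^ 2 + (g x + w x) ^ 2) / 2 - g x ^ 2 := by
            funext x; ring
          rw [h4]
          exact ((hb.add hc).div_const 2).sub hg2
        have hd : AEMeasurable (fun x => 2 * F₀ x * κ + 1) Q :=
          ((hFaem.const_mul 2).mul_const κ).add_const 1
        have hden : AEMeasurable (fun x => (2 * F₀ x * κ + 1) ^ 2) Q := by
          have h5 : (fun x => (2 * F₀ x * κ + 1) ^ 2)
              = fun x => (2 * F₀ x * κ + 1) * (2 * F₀ x * κ + 1) := by
            funext x; ring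
          rw [h5]; exact hd.mul hd
        have hdpos : ∀ x, (0:ℝ) < 2 * F₀ x * κ + 1 := by
          intro x
          have := mul_nonneg (mul_nonneg (by norm_num : (0:ℝ) ≤ 2) (hF₀ x)) hκ.le
          linarith
        have h6 : A.indicator (fun _ => (1:ℝ))
            = fun x => w x ^ 2 / (2 * F₀ x * κ + 1) ^ 2 := by
          funext x
          have hne : ((2 * F₀ x * κ + 1) ^ 2 : ℝ) ≠ 0 := pow_ne_zero 2 (hdpos x).ne'
          by_cases hx : x ∈ A
          · rw [Set.indicator_of_mem hx]
            have hwx : w x = 2 * F₀ x * κ + 1 := by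
              simp [hw, Set.indicator_of_mem hx]
            rw [hwx, div_self hne]
          · rw [Set.indicator_of_notMem hx]
            have hwx : w x = 0 := by simp [hw, Set.indicator_of_notMem hx]
            rw [hwx]
            simp
        rw [h6]
        exact hwsq.div hden
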